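/- arXiv:1009.4600 — 2 statements merged into one kernel-verified Lean document; each statement's English description precedes it below -/
import Mathlib

section
/- Let A be an admissible partition of C^s and Ω = {Y₀, …, Y_t} a finite set of admissible partitions with A ≤ Y_i for all i. Then an admissible partition M equals glb_A(Ω) if and only if A ≤ M, M ≤ Y_i for all i, and there is no admissible partition N with M < N and N ≤ Y_i for all i. -/
namespace BrinThompson

/-- A finite binary word. -/
abbrev Word : Type := List Bool

/-- A box in `C^s`, recorded as the tuple of binary words whose cylinders form the product. -/
abbrev Box (s : ℕ) : Type := Fin s → Word

/-- The box obtained from `b` by replacing its `i`-th word `u` by `u ++ [bit]`. -/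
def expandBox {s : ℕ} (i : Fin s) (bit : Bool) (b : Box s) : Box s :=
  Function.update b i (b i ++ [bit])

/-- `B` is obtained from `A` by a simple expansion of colour `i`: one box of `A` is replaced by
its two halves in direction `i`. -/
def SimpleExpansionC {s : ℕ} (i : Fin s) (A B : Finset (Box s)) : Prop :=
  ∃ b ∈ A, B = insert (expandBox i false b) (insert (expandBox i true b) (A.erase b))

/-- `B` is obtained from `A` by a simple expansion of some colour. -/
def SimpleExpansion {s : ℕ} (A B : Finset (Box s)) : Prop :=
  ∃ i : Fin s, SimpleExpansionC i A B

/-- `Expands A B` (`A ≤ B`): `B` is a descendant of `A`, i.e. `B` is obtained from `A` by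
finitely many simple expansions. -/
def Expands {s : ℕ} (A B : Finset (Box s)) : Prop :=
  Relation.ReflTransGen SimpleExpansion A B

/-- The one-element partition `{C^s}`. -/
def trivialPartition (s : ℕ) : Finset (Box s) := {fun _ => []}

/-- An admissible partition of `C^s`. -/
def Admissible {s : ℕ} (A : Finset (Box s)) : Prop :=
  Expands (trivialPartition s) A

/-- `M = glb_A(Ω)`: the greatest lower bound of `Ω` above `A`. -/
def IsGlbAbove {s : ℕ} (A : Finset (Box s)) (Ω : Set (Finset (Box s)))
    (M : Finset (Box s)) : Prop :=
  Admissible M ∧ Expands A M ∧ (∀ B ∈ Ω, Expands M B) ∧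
    ∀ N : Finset (Box s), Admissible N → Expands A N → (∀ B ∈ Ω, Expands N B) → Expands N M

/-- The depth of a box: the total length of its defining words. -/
def depth {s : ℕ} (b : Box s) : ℕ := ∑ i, (b i).length

/-- `BoxLE m b`: the box `m` contains the box `b`, i.e. each word of `m` is a prefix of the
corresponding word of `b`. -/
def BoxLE {s : ℕ} (m b : Box s) : Prop := ∀ i, m i <+: b i

/-- A box `y ∈ Y` is locally maximal with respect to `A`: for the box `m` of `A` containing `y`,
every box `j ∈ Y` contained in `m` satisfies `l(A,j) ≤ l(A,y)`, i.e. `depth j ≤ depth y`. -/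
def LocallyMaximal {s : ℕ} (A Y : Finset (Box s)) (y : Box s) : Prop :=
  ∀ m ∈ A, BoxLE m y → ∀ j ∈ Y, BoxLE m j → depth j ≤ depth y

/-- There is an edge of colour `i` between `y, y' ∈ Y` in the graph `Γ_A`: some simple
contraction `Z` of `Y` of colour `i` with `A ≤ Z` merges exactly `y` and `y'`. -/
def GammaAdjC {s : ℕ} (A Y : Finset (Box s)) (i : Fin s) (y y' : Box s) : Prop :=
  y ≠ y' ∧ y ∈ Y ∧ y' ∈ Y ∧
    ∃ Z : Finset (Box s), Admissible Z ∧ SimpleExpansionC i Z Y ∧ Expands A Z ∧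
      Y \ Z = {y, y'}

/-- The graph `Γ_A` (with its colours forgotten). -/
def Gamma {s : ℕ} (A Y : Finset (Box s)) : SimpleGraph (Box s) where
  Adj y y' := ∃ i : Fin s, GammaAdjC A Y i y y'
  symm := by
    constructor
    rintro y y' ⟨i, hne, hy, hy', Z, h1, h2, h3, h4⟩
    exact ⟨i, hne.symm, hy', hy, Z, h1, h2, h3, by rwa [Finset.pair_comm]⟩
  loopless := by constructor; rintro y ⟨i, hne, _⟩; exact hne rfl

/-- The geometric realization of the order complex (nerve) of the relation `le` on `P`:
finitely supported probability densities on `P` whose support is a chain, topologised as a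
subspace of `P → ℝ`. -/
abbrev OrderComplex (P : Type*) (le : P → P → Prop) : Type _ :=
  {f : P → ℝ // (Function.support f).Finite ∧ (∀ x, 0 ≤ f x) ∧
    IsChain le (Function.support f) ∧ ∑ᶠ x, f x = 1}

/-- A space is `t`-connected if it is nonempty, path-connected and its homotopy groups
`π_k` vanish for `1 ≤ k ≤ t`. -/
def TConnected (t : ℕ) (X : Type*) [TopologicalSpace X] : Prop :=
  Nonempty X ∧ PathConnectedSpace X ∧
    ∀ k : ℕ, 1 ≤ k → k ≤ t → ∀ x : X, Subsingleton (HomotopyGroup (Fin k) X x)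


/-!
Each simple expansion adds one box, so `≤` is antisymmetric; this gives the forward direction.
For the converse, the common refinement `M ⊓ N` of two admissible partitions is a descendant of
both, and it lies below every common descendant `Y` of `M` and `N`: expanding one box of `N`
in colour `i` changes `M ⊓ N` by expanding some of its boxes in colour `i`, so `N ≤ Y` gives
`M ⊓ N ≤ M ⊓ Y = Y`. If `M` is a maximal lower bound of `Ω` and `N` is another one, then
`M ⊓ N` is a lower bound above `M`, hence equals `M`, and so `N ≤ M`.
-/

open Finset

variable {s : ℕ}

lemma BoxLE.refl (b : Box s) : BoxLE b b := fun _ => List.prefix_refl _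

lemma BoxLE.trans {a b c : Box s} (h₁ : BoxLE a b) (h₂ : BoxLE b c) : BoxLE a c :=
  fun i => (h₁ i).trans (h₂ i)

lemma expandBox_apply_self (i : Fin s) (t : Bool) (b : Box s) :
    expandBox i t b i = b i ++ [t] :=
  Function.update_self i _ b

lemma expandBox_apply_of_ne {i j : Fin s} (h : j ≠ i) (t : Bool) (b : Box s) :
    expandBox i t b j = b j :=
  Function.update_of_ne h _ b

lemma boxLE_expandBox (i : Fin s) (t : Bool) (b : Box s) : BoxLE b (expandBox i t b) := by
  intro j
  rcases eq_or_ne j i with rfl | hj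
  · rw [expandBox_apply_self]
    exact List.prefix_append _ _
  · rw [expandBox_apply_of_ne hj]

lemma expandBox_ne_self (i : Fin s) (t : Bool) (b : Box s) : expandBox i t b ≠ b := by
  intro h
  have := congrArg List.length (congrFun h i)
  simp [expandBox_apply_self] at this

/-- The cylinders `[u]` and `[v]` meet iff `u` and `v` are comparable under `<+:`. -/
def Meets (b c : Box s) : Prop := ∀ i, b i <+: c i ∨ c i <+: b i

instance : DecidableRel (Meets (s := s)) := fun b c => by
  unfold Meets
  infer_instance

lemma Meets.refl (b : Box s) : Meets b b := fun _ => Or.inl (List.prefix_refl _)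

lemma Meets.symm {b c : Box s} (h : Meets b c) : Meets c b := fun i => (h i).symm

lemma Meets.mono_right {a b c : Box s} (h : Meets a c) (hbc : BoxLE b c) : Meets a b := by
  intro i
  rcases h i with h | h
  · exact List.prefix_or_prefix_of_prefix h (hbc i)
  · exact Or.inr ((hbc i).trans h)

lemma Meets.mono_left {a b c : Box s} (h : Meets c a) (hbc : BoxLE b c) : Meets b a :=
  (h.symm.mono_right hbc).symm

lemma BoxLE.meets {b c : Box s} (h : BoxLE b c) : Meets b c := (Meets.refl c).mono_left h

lemma meets_of_boxLE_of_boxLE {a b c : Box s} (ha : BoxLE a c) (hb : BoxLE b c) : Meets a b :=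
  (Meets.refl c).mono_left ha |>.mono_right hb

lemma not_meets_expandBox_false_true (i : Fin s) (b : Box s) :
    ¬ Meets (expandBox i false b) (expandBox i true b) := by
  intro h
  simpa [expandBox_apply_self] using h i

lemma Meets.of_expandBox {m b : Box s} {i : Fin s} {t : Bool}
    (h : Meets m (expandBox i t b)) : Meets m b :=
  h.mono_right (boxLE_expandBox i t b)

lemma Meets.expandBox_of_prefix {m b : Box s} {i : Fin s} (h : Meets m b) (hi : m i <+: b i)
    (t : Bool) : Meets m (expandBox i t b) := by
  intro j
  rcases eq_or_ne j i with rfl | hj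
  · rw [expandBox_apply_self]
    exact Or.inl (hi.trans (List.prefix_append _ _))
  · rw [expandBox_apply_of_ne hj]
    exact h j

lemma Meets.expandBox_of_concat_prefix {m b : Box s} {i : Fin s} {t : Bool} (h : Meets m b)
    (ht : b i ++ [t] <+: m i) : Meets m (expandBox i t b) := by
  intro j
  rcases eq_or_ne j i with rfl | hj
  · rw [expandBox_apply_self]
    exact Or.inr ht
  · rw [expandBox_apply_of_ne hj]
    exact h j

lemma exists_concat_prefix {u v : Word} (h : u <+: v) (hvu : ¬ v <+: u) :
    ∃ t, u ++ [t] <+: v := by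
  obtain ⟨_ | ⟨t, r⟩, rfl⟩ := h
  · exact absurd (by simp) hvu
  · exact ⟨t, (List.prefix_append_right_inj u).mpr ⟨r, rfl⟩⟩

/-- For meeting boxes `b` and `c`, the box `b ∩ c`. -/
def inter (b c : Box s) : Box s := fun i => if b i <+: c i then c i else b i

lemma inter_apply_of_prefix {b c : Box s} {i : Fin s} (h : b i <+: c i) : inter b c i = c i :=
  if_pos h

lemma inter_apply_of_prefix_left {b c : Box s} {i : Fin s} (h : c i <+: b i) :
    inter b c i = b i := by
  unfold inter
  split_ifs with hbc
  · exact hbc.eq_of_length (le_antisymm hbc.length_le h.length_le) |>.symm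
  · rfl

lemma boxLE_inter_left (b c : Box s) : BoxLE b (inter b c) := by
  intro i
  unfold inter
  split_ifs with h
  · exact h
  · exact List.prefix_refl _

lemma boxLE_inter_right {b c : Box s} (h : Meets b c) : BoxLE c (inter b c) := by
  intro i
  rcases h i with h | h
  · rw [inter_apply_of_prefix h]
  · rw [inter_apply_of_prefix_left h]
    exact h

lemma inter_eq_right {b c : Box s} (h : BoxLE b c) : inter b c = c :=
  funext fun i => inter_apply_of_prefix (h i)

lemma inter_comm {b c : Box s} (h : Meets b c) : inter b c = inter c b := by
  funext i
  rcases h i with h | h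
  · rw [inter_apply_of_prefix h, inter_apply_of_prefix_left h]
  · rw [inter_apply_of_prefix h, inter_apply_of_prefix_left h]

lemma inter_expandBox_of_prefix {m b : Box s} {i : Fin s} (hi : m i <+: b i) (t : Bool) :
    inter m (expandBox i t b) = expandBox i t (inter m b) := by
  funext j
  rcases eq_or_ne j i with rfl | hj
  · rw [expandBox_apply_self, inter_apply_of_prefix hi,
      inter_apply_of_prefix
        (by rw [expandBox_apply_self]; exact hi.trans (List.prefix_append _ _)),
      expandBox_apply_self]
  · simp only [inter, expandBox_apply_of_ne hj]

lemma inter_expandBox_of_concat_prefix {m b : Box s} {i : Fin s} {t : Bool}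
    (ht : b i ++ [t] <+: m i) : inter m (expandBox i t b) = inter m b := by
  funext j
  rcases eq_or_ne j i with rfl | hj
  · rw [inter_apply_of_prefix_left (by rwa [expandBox_apply_self]),
      inter_apply_of_prefix_left ((List.prefix_append _ _).trans ht)]
  · simp only [inter, expandBox_apply_of_ne hj]

lemma concat_prefix_of_meets_expandBox {m b : Box s} {i : Fin s} {t : Bool}
    (h : Meets m (expandBox i t b)) (hi : ¬ m i <+: b i) : b i ++ [t] <+: m i := by
  have hmi := h i
  rw [expandBox_apply_self] at hmi
  rcases hmi with hmi | hmi
  · rcases List.prefix_concat_iff.mp hmi with hmi | hmi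
    · exact hmi ▸ List.prefix_refl _
    · exact absurd hmi hi
  · exact hmi

def DisjointBoxes (P : Finset (Box s)) : Prop :=
  (P : Set (Box s)).Pairwise fun b c => ¬ Meets b c

lemma DisjointBoxes.eq_of_meets {P : Finset (Box s)} (hP : DisjointBoxes P) {b c : Box s}
    (hb : b ∈ P) (hc : c ∈ P) (h : Meets b c) : b = c :=
  by_contra fun hne => hP hb hc hne h

lemma disjointBoxes_trivialPartition (s : ℕ) : DisjointBoxes (trivialPartition s) := by
  simp [DisjointBoxes, trivialPartition]

lemma DisjointBoxes.of_simpleExpansion {N N' : Finset (Box s)} (hN : DisjointBoxes N)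
    (h : SimpleExpansion N N') : DisjointBoxes N' := by
  obtain ⟨i, b, hb, rfl⟩ := h
  have : Std.Symm fun b c : Box s => ¬ Meets b c := ⟨fun _ _ h h' => h h'.symm⟩
  have hhalf : ∀ t, ∀ c ∈ N.erase b, ¬ Meets (expandBox i t b) c := fun t c hc h =>
    hN hb (mem_of_mem_erase hc) (ne_of_mem_erase hc).symm h.symm.of_expandBox.symm
  rw [DisjointBoxes, coe_insert, coe_insert, Set.pairwise_insert_of_symm,
    Set.pairwise_insert_of_symm]
  refine ⟨⟨hN.mono (coe_subset.mpr (erase_subset b N)), fun c hc _ => hhalf true c hc⟩, ?_⟩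
  rintro c (rfl | hc) -
  · exact not_meets_expandBox_false_true i b
  · exact hhalf false c hc

lemma DisjointBoxes.of_expands {N N' : Finset (Box s)} (hN : DisjointBoxes N)
    (h : Expands N N') : DisjointBoxes N' := by
  induction h with
  | refl => exact hN
  | tail _ hstep ih => exact ih.of_simpleExpansion hstep

lemma Admissible.disjointBoxes {N : Finset (Box s)} (h : Admissible N) : DisjointBoxes N :=
  (disjointBoxes_trivialPartition s).of_expands h

lemma DisjointBoxes.expandBox_notMem {P : Finset (Box s)} (hP : DisjointBoxes P) {b : Box s}
    (hb : b ∈ P) (i : Fin s) (t : Bool) : expandBox i t b ∉ P := fun h =>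
  hP hb h (expandBox_ne_self i t b).symm (boxLE_expandBox i t b).meets

lemma card_of_simpleExpansion {N N' : Finset (Box s)} (hN : DisjointBoxes N)
    (h : SimpleExpansion N N') : #N' = #N + 1 := by
  obtain ⟨i, b, hb, rfl⟩ := h
  have hnotMem : ∀ t, expandBox i t b ∉ N.erase b := fun t h =>
    hN.expandBox_notMem hb i t (mem_of_mem_erase h)
  have hne : expandBox i false b ≠ expandBox i true b := fun h =>
    not_meets_expandBox_false_true i b (h ▸ Meets.refl _)
  rw [card_insert_of_notMem, card_insert_of_notMem (hnotMem true), card_erase_add_one hb]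
  simp only [mem_insert, not_or]
  exact ⟨hne, hnotMem false⟩

lemma Expands.eq_or_card_lt {N N' : Finset (Box s)} (hN : DisjointBoxes N)
    (h : Expands N N') : N = N' ∨ #N < #N' := by
  induction h with
  | refl => exact Or.inl rfl
  | tail hprev hstep ih =>
    have := card_of_simpleExpansion (hN.of_expands hprev) hstep
    rcases ih with rfl | _ <;> omega

lemma DisjointBoxes.expands_antisymm {N N' : Finset (Box s)} (hN : DisjointBoxes N)
    (h₁ : Expands N N') (h₂ : Expands N' N) : N = N' := by
  rcases h₁.eq_or_card_lt hN with h | h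
  · exact h
  · rcases h₂.eq_or_card_lt (hN.of_expands h₁) with h' | h'
    · exact h'.symm
    · omega

lemma mem_simpleExpansion_iff {N : Finset (Box s)} {i : Fin s} {b x : Box s} :
    x ∈ insert (expandBox i false b) (insert (expandBox i true b) (N.erase b)) ↔
      x ∈ N.erase b ∨ ∃ t, expandBox i t b = x := by
  simp only [mem_insert, Bool.exists_bool]
  tauto

lemma exists_boxLE_of_expands {P Q : Finset (Box s)} (h : Expands P Q) {q : Box s}
    (hq : q ∈ Q) : ∃ p ∈ P, BoxLE p q := by
  induction h generalizing q with
  | refl => exact ⟨q, hq, BoxLE.refl q⟩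
  | tail _ hstep ih =>
    obtain ⟨i, b, hb, rfl⟩ := hstep
    rcases mem_simpleExpansion_iff.mp hq with hq | ⟨t, rfl⟩
    · exact ih (mem_of_mem_erase hq)
    · obtain ⟨p, hp, hpb⟩ := ih hb
      exact ⟨p, hp, hpb.trans (boxLE_expandBox i t b)⟩

def commonRefinement (P Q : Finset (Box s)) : Finset (Box s) :=
  ((P ×ˢ Q).filter fun p => Meets p.1 p.2).image fun p => inter p.1 p.2

lemma mem_commonRefinement {P Q : Finset (Box s)} {x : Box s} :
    x ∈ commonRefinement P Q ↔ ∃ m ∈ P, ∃ n ∈ Q, Meets m n ∧ inter m n = x := by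
  simp [commonRefinement, and_assoc]

lemma commonRefinement_comm (P Q : Finset (Box s)) :
    commonRefinement P Q = commonRefinement Q P := by
  ext x
  simp only [mem_commonRefinement]
  constructor <;>
  · rintro ⟨m, hm, n, hn, h, rfl⟩
    exact ⟨n, hn, m, hm, h.symm, (inter_comm h).symm⟩

lemma DisjointBoxes.commonRefinement {P Q : Finset (Box s)} (hP : DisjointBoxes P)
    (hQ : DisjointBoxes Q) : DisjointBoxes (commonRefinement P Q) := by
  intro x hx y hy hne hxy
  obtain ⟨m, hm, n, hn, hmn, rfl⟩ := mem_commonRefinement.mp (mem_coe.mp hx)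
  obtain ⟨m', hm', n', hn', hmn', rfl⟩ := mem_commonRefinement.mp (mem_coe.mp hy)
  obtain rfl : m = m' := hP.eq_of_meets hm hm'
    ((hxy.mono_left (boxLE_inter_left m n)).mono_right (boxLE_inter_left m' n'))
  obtain rfl : n = n' := hQ.eq_of_meets hn hn'
    ((hxy.mono_left (boxLE_inter_right hmn)).mono_right (boxLE_inter_right hmn'))
  exact hne rfl

lemma commonRefinement_eq_right_of_expands {P Q : Finset (Box s)} (hP : DisjointBoxes P)
    (h : Expands P Q) : commonRefinement P Q = Q := by
  ext x
  rw [mem_commonRefinement]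
  constructor
  · rintro ⟨m, hm, n, hn, hmn, rfl⟩
    obtain ⟨p, hp, hpn⟩ := exists_boxLE_of_expands h hn
    obtain rfl := hP.eq_of_meets hm hp (hmn.mono_right hpn)
    rwa [inter_eq_right hpn]
  · intro hx
    obtain ⟨p, hp, hpx⟩ := exists_boxLE_of_expands h hx
    exact ⟨p, hp, x, hx, hpx.meets, inter_eq_right hpx⟩

def expandAll (i : Fin s) (T P : Finset (Box s)) : Finset (Box s) :=
  P \ T ∪ (T ×ˢ univ).image fun p => expandBox i p.2 p.1

lemma mem_expandAll {i : Fin s} {T P : Finset (Box s)} {x : Box s} :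
    x ∈ expandAll i T P ↔ x ∈ P \ T ∨ ∃ y ∈ T, ∃ t, expandBox i t y = x := by
  simp [expandAll]

lemma simpleExpansion_expandAll_insert {i : Fin s} {T P : Finset (Box s)} (hP : DisjointBoxes P)
    {x : Box s} (hx : x ∈ P) (hxT : x ∉ T) (hT : T ⊆ P) :
    SimpleExpansion (expandAll i T P) (expandAll i (insert x T) P) := by
  have hexp : ∀ y ∈ T, ∀ t, expandBox i t y ≠ x := fun y hy t h =>
    hP.expandBox_notMem (hT hy) i t (h ▸ hx)
  refine ⟨i, x, mem_expandAll.mpr (Or.inl (mem_sdiff.mpr ⟨hx, hxT⟩)), ?_⟩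
  ext z
  rw [mem_simpleExpansion_iff, mem_erase, mem_expandAll, mem_expandAll]
  simp only [mem_sdiff, mem_insert, not_or, exists_eq_or_imp]
  constructor
  · rintro (⟨hzP, hzx, hzT⟩ | hz | ⟨y, hy, t, rfl⟩)
    · exact Or.inl ⟨hzx, Or.inl ⟨hzP, hzT⟩⟩
    · exact Or.inr hz
    · exact Or.inl ⟨hexp y hy t, Or.inr ⟨y, hy, t, rfl⟩⟩
  · rintro (⟨hzx, ⟨hzP, hzT⟩ | hz⟩ | hz)
    · exact Or.inl ⟨hzP, hzx, hzT⟩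
    · exact Or.inr (Or.inr hz)
    · exact Or.inr (Or.inl hz)

lemma expands_expandAll (i : Fin s) {T P : Finset (Box s)} (hP : DisjointBoxes P)
    (hT : T ⊆ P) : Expands P (expandAll i T P) := by
  induction T using Finset.induction_on with
  | empty =>
    rw [show expandAll i ∅ P = P by simp [expandAll]]
    exact Relation.ReflTransGen.refl
  | insert x T hxT ih =>
    have hTP : T ⊆ P := (subset_insert x T).trans hT
    exact (ih hTP).tail
      (simpleExpansion_expandAll_insert hP (hT (mem_insert_self x T)) hxT hTP)

/-- Splitting `b ∈ N` in colour `i` splits, in colour `i`, those boxes `m ∩ b` of `M ⊓ N` with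
`m i <+: b i`; when instead `b i` is a proper prefix of `m i`, `m ∩ b` meets just one half. -/
lemma commonRefinement_expand_eq {M N : Finset (Box s)} (hM : DisjointBoxes M)
    (hN : DisjointBoxes N) {b : Box s} (hb : b ∈ N) (i : Fin s) :
    commonRefinement M (insert (expandBox i false b) (insert (expandBox i true b) (N.erase b))) =
      expandAll i ((M.filter fun m => Meets m b ∧ m i <+: b i).image (inter · b))
        (commonRefinement M N) := by
  ext z
  simp only [mem_commonRefinement, mem_simpleExpansion_iff, mem_expandAll, mem_sdiff, mem_image,
    mem_filter, not_exists, not_and, mem_erase]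
  constructor
  · rintro ⟨m, hm, n, (⟨hnb, hn⟩ | ⟨t, rfl⟩), hmn, rfl⟩
    · refine Or.inl ⟨⟨m, hm, n, hn, hmn, rfl⟩, fun m' ⟨_, hm'b, _⟩ he => hnb ?_⟩
      exact hN.eq_of_meets hn hb <|
        meets_of_boxLE_of_boxLE (boxLE_inter_right hmn) (he ▸ boxLE_inter_right hm'b)
    · have hmb := hmn.of_expandBox
      by_cases hi : m i <+: b i
      · exact Or.inr ⟨inter m b, ⟨m, ⟨hm, hmb, hi⟩, rfl⟩, t, (inter_expandBox_of_prefix hi t).symm⟩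
      · rw [inter_expandBox_of_concat_prefix (concat_prefix_of_meets_expandBox hmn hi)]
        refine Or.inl ⟨⟨m, hm, b, hb, hmb, rfl⟩, fun m' ⟨hm', _, hi'⟩ he => hi ?_⟩
        obtain rfl : m' = m := hM.eq_of_meets hm' hm <|
          meets_of_boxLE_of_boxLE (boxLE_inter_left m' b) (he ▸ boxLE_inter_left m b)
        exact hi'
  · rintro (⟨⟨m, hm, n, hn, hmn, rfl⟩, hzT⟩ | ⟨_, ⟨m, ⟨hm, hmb, hi⟩, rfl⟩, t, rfl⟩)
    · by_cases hnb : n = b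
      · subst hnb
        have hi : ¬ m i <+: n i := fun hi => hzT m ⟨hm, hmn, hi⟩ rfl
        obtain ⟨t, ht⟩ := exists_concat_prefix ((hmn i).resolve_left hi) hi
        exact ⟨m, hm, expandBox i t n, Or.inr ⟨t, rfl⟩, hmn.expandBox_of_concat_prefix ht,
          inter_expandBox_of_concat_prefix ht⟩
      · exact ⟨m, hm, n, Or.inl ⟨hnb, hn⟩, hmn, rfl⟩
    · exact ⟨m, hm, expandBox i t b, Or.inr ⟨t, rfl⟩, hmb.expandBox_of_prefix hi t,
        inter_expandBox_of_prefix hi t⟩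

lemma commonRefinement_expands_of_simpleExpansion {M N N' : Finset (Box s)}
    (hM : DisjointBoxes M) (hN : DisjointBoxes N) (h : SimpleExpansion N N') :
    Expands (commonRefinement M N) (commonRefinement M N') := by
  obtain ⟨i, b, hb, rfl⟩ := h
  rw [commonRefinement_expand_eq hM hN hb]
  refine expands_expandAll i (hM.commonRefinement hN) fun x hx => ?_
  obtain ⟨m, hm, rfl⟩ := mem_image.mp hx
  obtain ⟨hm, hmb, -⟩ := mem_filter.mp hm
  exact mem_commonRefinement.mpr ⟨m, hm, b, hb, hmb, rfl⟩

lemma commonRefinement_mono_right {M N Y : Finset (Box s)} (hM : DisjointBoxes M)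
    (hN : DisjointBoxes N) (h : Expands N Y) :
    Expands (commonRefinement M N) (commonRefinement M Y) := by
  induction h with
  | refl => exact Relation.ReflTransGen.refl
  | tail hprev hstep ih =>
    exact ih.trans (commonRefinement_expands_of_simpleExpansion hM (hN.of_expands hprev) hstep)

lemma expands_commonRefinement_left {M N : Finset (Box s)} (hM : Admissible M)
    (hN : Admissible N) : Expands M (commonRefinement M N) := by
  have h := commonRefinement_mono_right hM.disjointBoxes (disjointBoxes_trivialPartition s) hN
  rwa [commonRefinement_comm,
    commonRefinement_eq_right_of_expands (disjointBoxes_trivialPartition s) hM] at h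

lemma expands_commonRefinement_right {M N : Finset (Box s)} (hM : Admissible M)
    (hN : Admissible N) : Expands N (commonRefinement M N) :=
  commonRefinement_comm N M ▸ expands_commonRefinement_left hN hM

lemma commonRefinement_expands {M N Y : Finset (Box s)} (hM : DisjointBoxes M)
    (hN : DisjointBoxes N) (hMY : Expands M Y) (hNY : Expands N Y) :
    Expands (commonRefinement M N) Y :=
  commonRefinement_eq_right_of_expands hM hMY ▸ commonRefinement_mono_right hM hN hNY

theorem isGlbAbove_iff_no_larger_lower_bound_general (s : ℕ)
    (A : Finset (Box s))
    (Ω : Set (Finset (Box s)))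
    (M : Finset (Box s)) (hM : Admissible M) :
    IsGlbAbove A Ω M ↔
      (Expands A M ∧ (∀ B ∈ Ω, Expands M B) ∧
        ¬ ∃ N : Finset (Box s), Admissible N ∧ Expands M N ∧ M ≠ N ∧
          ∀ B ∈ Ω, Expands N B) := by
  constructor
  · rintro ⟨-, hAM, hMB, hglb⟩
    refine ⟨hAM, hMB, fun ⟨N, hN, hMN, hne, hNB⟩ => hne ?_⟩
    exact hM.disjointBoxes.expands_antisymm hMN (hglb N hN (hAM.trans hMN) hNB)
  · rintro ⟨hAM, hMB, hmax⟩
    refine ⟨hM, hAM, hMB, fun N hN _ hNB => ?_⟩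
    have hMD := expands_commonRefinement_left hM hN
    have hDB : ∀ B ∈ Ω, Expands (commonRefinement M N) B := fun B hB =>
      commonRefinement_expands hM.disjointBoxes hN.disjointBoxes (hMB B hB) (hNB B hB)
    have hMeq : M = commonRefinement M N :=
      by_contra fun hne => hmax ⟨_, hM.trans hMD, hMD, hne, hDB⟩
    exact hMeq ▸ expands_commonRefinement_right hM hN

/-- characterisation of the greatest lower bound `glb_A(Ω)`. -/
theorem isGlbAbove_iff_no_larger_lower_bound (s : ℕ) (hs : 1 ≤ s)
    (A : Finset (Box s)) (hA : Admissible A)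
    (Ω : Set (Finset (Box s))) (hfin : Ω.Finite) (hne : Ω.Nonempty)
    (hadm : ∀ B ∈ Ω, Admissible B) (hAΩ : ∀ B ∈ Ω, Expands A B)
    (M : Finset (Box s)) (hM : Admissible M) :
    IsGlbAbove A Ω M ↔
      (Expands A M ∧ (∀ B ∈ Ω, Expands M B) ∧
        ¬ ∃ N : Finset (Box s), Admissible N ∧ Expands M N ∧ M ≠ N ∧
          ∀ B ∈ Ω, Expands N B) :=
  isGlbAbove_iff_no_larger_lower_bound_general s A Ω M hM

end BrinThompson
end

section
/- For every s ≥ 1, the geometric realization |N(𝔄)| of the nerve of the poset 𝔄 of admissible partitions of C^s is contractible. -/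
/-!
The trivial partition is the least element of the poset, so the nerve is a cone with that vertex:
adding the least element to a chain gives a chain, hence the straight segment from any point of the
realization to the vertex stays inside the realization, and these segments form a contraction.
-/

namespace BrinThompson

open Function

namespace OrderComplex

variable {P : Type*} {le : P → P → Prop}

noncomputable def segment (f g : OrderComplex P le) (hfg : IsChain le (support f.1 ∪ support g.1))
    (t : unitInterval) : OrderComplex P le := by
  have hf := support_mul_subset_right (fun _ => 1 - (t : ℝ)) f.1
  have hg := support_mul_subset_right (fun _ => (t : ℝ)) g.1
  have hsupp := (support_add _ _).trans (Set.union_subset_union hf hg)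
  refine ⟨fun x => (1 - (t : ℝ)) * f.1 x + t * g.1 x, (f.2.1.union g.2.1).subset hsupp,
    fun x => ?_, hfg.mono hsupp, ?_⟩
  · exact add_nonneg (mul_nonneg (unitInterval.one_minus_nonneg t) (f.2.2.1 x))
      (mul_nonneg (unitInterval.nonneg t) (g.2.2.1 x))
  · rw [finsum_add_distrib (f.2.1.subset hf) (g.2.1.subset hg), ← mul_finsum, ← mul_finsum,
      f.2.2.2.2, g.2.2.2.2]
    ring

theorem continuous_segment (g : OrderComplex P le)
    (hg : ∀ f : OrderComplex P le, IsChain le (support f.1 ∪ support g.1)) :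
    Continuous fun p : unitInterval × OrderComplex P le => segment p.2 g (hg p.2) p.1 := by
  refine Continuous.subtype_mk (continuous_pi fun x => ?_) _
  have ht : Continuous fun p : unitInterval × OrderComplex P le => (p.1 : ℝ) := by fun_prop
  have hf : Continuous fun p : unitInterval × OrderComplex P le => p.2.1 x :=
    (continuous_apply x).comp (continuous_subtype_val.comp continuous_snd)
  exact ((continuous_const.sub ht).mul hf).add (ht.mul continuous_const)

theorem contractibleSpace_of_isChain_support_union (g : OrderComplex P le)
    (hg : ∀ f : OrderComplex P le, IsChain le (support f.1 ∪ support g.1)) :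
    ContractibleSpace (OrderComplex P le) := by
  rw [contractible_iff_id_nullhomotopic]
  refine ⟨g, ⟨⟨⟨fun p => segment p.2 g (hg p.2) p.1, continuous_segment g hg⟩, ?_, ?_⟩⟩⟩
  all_goals intro f; ext x; simp [segment]

noncomputable def vertex [DecidableEq P] (m : P) : OrderComplex P le :=
  ⟨Pi.single m 1, by simp [Pi.support_single_of_ne], fun x => by
    by_cases h : x = m <;> simp [h],
    by simp [Pi.support_single_of_ne, Set.subsingleton_singleton.isChain],
    by rw [finsum_eq_single _ m fun x hx => Pi.single_eq_of_ne hx 1, Pi.single_eq_same]⟩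

theorem isChain_support_union_vertex [DecidableEq P] {m : P} (hm : ∀ x, le m x)
    (f : OrderComplex P le) : IsChain le (support f.1 ∪ support (vertex (le := le) m).1) := by
  rw [vertex, Pi.support_single_of_ne one_ne_zero, Set.union_singleton]
  exact f.2.2.2.1.insert fun x _ _ => Or.inl (hm x)

theorem contractibleSpace_of_forall_le (m : P) (hm : ∀ x, le m x) :
    ContractibleSpace (OrderComplex P le) := by
  classical
  exact contractibleSpace_of_isChain_support_union _ (isChain_support_union_vertex hm)

end OrderComplex

theorem orderComplex_admissible_contractible_general (s : ℕ) :
    ContractibleSpace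
      (OrderComplex {A : Finset (Box s) // Admissible A}
        (fun A B => Expands A.1 B.1)) :=
  OrderComplex.contractibleSpace_of_forall_le ⟨trivialPartition s, .refl⟩ fun A => A.2

/-- the geometric realization of the nerve of the poset `𝔄` of admissible
partitions of `C^s` is contractible. -/
theorem orderComplex_admissible_contractible (s : ℕ) (hs : 1 ≤ s) :
    ContractibleSpace
      (OrderComplex {A : Finset (Box s) // Admissible A}
        (fun A B => Expands A.1 B.1)) :=
  orderComplex_admissible_contractible_general s

end BrinThompson
end
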